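/- Let x_{t}, x_{t-1}, ..., be iterates in R^d and define u_t = x_t + (1/A) sum_{j=0}^{J-1} (sum_{s=j}^{J-1} alpha_s) (x_{t-j} - x_{t-j-1}) with A = 1 - sum_{j=0}^{J-1} alpha_j != 0. Suppose the updates satisfy x_{t+1} = x_t - K delta_{t+1} where delta_{t+1} = A g_t + sum_{j=0}^{J-1} alpha_j delta_{t-j} (with delta_{t-j} = -(x_{t-j} - x_{t-j-1})/K). Then u_{t+1} = u_t - K g_t. -/
import Mathlib


/-- Auxiliary-sequence lemma of FedMIM: with
`δ t = -(x t - x (t-1))/K`, the multi-step momentum recursion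
`δ (t+1) = A • g t + ∑ⱼ αⱼ • δ (t-j)` and the auxiliary sequence
`u t = x t + A⁻¹ • ∑ⱼ (∑_{s=j}^{J-1} αₛ) • (x (t-j) - x (t-j-1))`,
one has the simple update `u (t+1) = u t - K • g t`. -/
theorem auxiliary_sequence_update (dim J : ℕ) (K : ℝ) (hK : K ≠ 0)
    (α : ℕ → ℝ) (A : ℝ) (hA : A = 1 - ∑ j ∈ Finset.range J, α j) (hA0 : A ≠ 0)
    (x u δ g : ℤ → EuclideanSpace ℝ (Fin dim))
    (hδ : ∀ t : ℤ, δ t = (-(1 / K)) • (x t - x (t - 1)))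
    (hrec : ∀ t : ℤ, δ (t + 1) = A • g t +
      ∑ j ∈ Finset.range J, α j • δ (t - (j : ℤ)))
    (hu : ∀ t : ℤ, u t = x t + A⁻¹ •
      ∑ j ∈ Finset.range J, (∑ s ∈ Finset.Ico j J, α s) •
        (x (t - (j : ℤ)) - x (t - (j : ℤ) - 1))) :
    ∀ t : ℤ, u (t + 1) = u t - K • g t := by
  intro t
  set β : ℕ → ℝ := fun j => ∑ s ∈ Finset.Ico j J, α s with hβ
  have hβe : ∀ j : ℕ, (∑ s ∈ Finset.Ico j J, α s) = β j := fun _ => rfl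
  have hβ0 : β 0 = 1 - A := by
    show (∑ s ∈ Finset.Ico 0 J, α s) = 1 - A
    rw [hA, ← Finset.range_eq_Ico]; ring
  have hβJ : β J = 0 := by simp [hβ]
  have hβstep : ∀ j < J, β j = α j + β (j + 1) := fun j hj =>
    Finset.sum_eq_sum_Ico_succ_bot hj _
  set f : ℤ → EuclideanSpace ℝ (Fin dim) := fun s => x s - x (s - 1) with hf
  have hfe : ∀ s : ℤ, x s - x (s - 1) = f s := fun _ => rfl
  -- the recursion in terms of f
  have hD : f (t + 1) = (-(K * A)) • g t + ∑ j ∈ Finset.range J, α j • f (t - (j : ℤ)) := by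
    have h := hrec t
    simp only [hδ] at h
    have h2 := congrArg (fun v : EuclideanSpace ℝ (Fin dim) => (-K : ℝ) • v) h
    simp only [smul_add, smul_smul, Finset.smul_sum] at h2
    have hs : (-K) * (-(1 / K)) = 1 := by field_simp
    have hgoal : ∀ j : ℕ, (-K) * (α j * (-(1 / K))) = α j := by
      intro j; field_simp
    simp only [hs, one_smul, hgoal] at h2
    have he : (-K) * A = -(K * A) := by ring
    have h3 : x (t + 1) - x (t + 1 - 1) = f (t + 1) := hfe (t + 1)
    rw [h3] at h2
    simp only [hfe] at h2
    rw [h2, he]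
  -- shift identity
  have hshift : ∀ n : ℕ, ∑ j ∈ Finset.range n, β j • f (t + 1 - (j : ℤ)) =
      β 0 • f (t + 1) - β n • f (t + 1 - (n : ℤ)) +
        ∑ j ∈ Finset.range n, β (j + 1) • f (t - (j : ℤ)) := by
    intro n
    induction n with
    | zero => simp
    | succ n ih =>
      rw [Finset.sum_range_succ, Finset.sum_range_succ, ih]
      have h1 : t + 1 - ((n : ℤ) + 1) = t - (n : ℤ) := by ring
      push_cast
      rw [h1]
      abel
  have hS1 : ∑ j ∈ Finset.range J, β j • f (t + 1 - (j : ℤ)) =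
      β 0 • f (t + 1) + ∑ j ∈ Finset.range J, β (j + 1) • f (t - (j : ℤ)) := by
    rw [hshift J, hβJ]; simp
  -- sums difference
  have hdiff : ∑ j ∈ Finset.range J, β j • f (t + 1 - (j : ℤ)) -
      ∑ j ∈ Finset.range J, β j • f (t - (j : ℤ)) =
      β 0 • f (t + 1) - ∑ j ∈ Finset.range J, α j • f (t - (j : ℤ)) := by
    rw [hS1]
    have h4 : ∑ j ∈ Finset.range J, β (j + 1) • f (t - (j : ℤ)) -
        ∑ j ∈ Finset.range J, β j • f (t - (j : ℤ)) =
        - ∑ j ∈ Finset.range J, α j • f (t - (j : ℤ)) := by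
      rw [← Finset.sum_sub_distrib, ← Finset.sum_neg_distrib]
      apply Finset.sum_congr rfl
      intro j hj
      rw [← sub_smul, ← neg_smul]
      congr 1
      have := hβstep j (Finset.mem_range.mp hj)
      linarith
    rw [add_sub_assoc, h4]
    abel
  -- now the main goal
  rw [hu (t + 1), hu t]
  simp only [hβe, hfe]
  set S1 := ∑ j ∈ Finset.range J, β j • f (t + 1 - (j : ℤ)) with hS1d
  set S0 := ∑ j ∈ Finset.range J, β j • f (t - (j : ℤ)) with hS0d
  set T := ∑ j ∈ Finset.range J, α j • f (t - (j : ℤ)) with hT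
  -- goal: x (t+1) + A⁻¹ • S1 = x t + A⁻¹ • S0 - K • g t
  have key : f (t + 1) + A⁻¹ • (S1 - S0) = (-K) • g t := by
    rw [hdiff, hβ0, hD]
    match_scalars <;> field_simp <;> ring
  have hfe1 : f (t + 1) = x (t + 1) - x t := by
    rw [hf]; simp
  rw [hfe1] at key
  have hsplit : x (t + 1) + A⁻¹ • S1 = (x (t + 1) - x t + A⁻¹ • (S1 - S0)) + (x t + A⁻¹ • S0) := by
    rw [smul_sub]; abel
  rw [hsplit, key, neg_smul]
  abel
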